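/- arXiv:2508.17743 — 6 statements merged into one kernel-verified Lean document; each statement's English description precedes it below -/
import Mathlib

section
/- Let G be a simple graph on a finite vertex type and let v be a vertex of G. Then the permanental polynomial of the Laplacian matrix satisfies ψ(L(G)) = (x − d(v))·ψ(L_v(G)) + Σ_{u ∈ N(v)} ψ(L_{uv}(G)) + 2·Σ_{C ∈ 𝔠_G(v)} ψ(L_{V(C)}(G)). -/
open Polynomial Matrix

attribute [local instance] Classical.propDecidable

noncomputable section

/-- The permanent of a square matrix: `per M = ∑_{σ} ∏_i M i (σ i)`. -/
def Matrix.per {n R : Type*} [Fintype n] [DecidableEq n] [CommRing R]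
    (M : Matrix n n R) : R :=
  ∑ σ : Equiv.Perm n, ∏ i, M i (σ i)

/-- The characteristic polynomial `φ(M) = det (x·I - M)`. -/
def phi {n R : Type*} [Fintype n] [DecidableEq n] [CommRing R]
    (M : Matrix n n (Polynomial R)) : Polynomial R :=
  ((Polynomial.X : Polynomial R) • (1 : Matrix n n (Polynomial R)) - M).det

/-- The permanental polynomial `ψ(M) = per (x·I - M)`. -/
def psi {n R : Type*} [Fintype n] [DecidableEq n] [CommRing R]
    (M : Matrix n n (Polynomial R)) : Polynomial R :=
  ((Polynomial.X : Polynomial R) • (1 : Matrix n n (Polynomial R)) - M).per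

variable {V : Type*}

/-- The principal submatrix of `M` obtained by deleting the rows and columns indexed by `S`. -/
def delSub {R : Type*} (M : Matrix V V R) (S : Set V) :
    Matrix {w : V // w ∉ S} {w : V // w ∉ S} R :=
  M.submatrix Subtype.val Subtype.val

/-- `C` is a cycle of `G`: a subgraph of `G` that is connected, has nonempty vertex set,
and in which every vertex of `C` has degree exactly `2` in `C`. -/
def IsCycleSub (G : SimpleGraph V) (C : G.Subgraph) : Prop :=
  C.Connected ∧ C.verts.Nonempty ∧ ∀ w ∈ C.verts, (C.neighborSet w).ncard = 2

variable [Fintype V] [DecidableEq V]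

/-- The degree diagonal matrix `D(G)` of a graph. -/
def degMat (R : Type*) [CommRing R] (G : SimpleGraph V) [DecidableRel G.Adj] :
    Matrix V V R :=
  Matrix.diagonal fun w => (G.degree w : R)

/-- The Laplacian matrix `L(G) = D(G) - A(G)`. -/
def lapMat (R : Type*) [CommRing R] (G : SimpleGraph V) [DecidableRel G.Adj] :
    Matrix V V R :=
  degMat R G - G.adjMatrix R

/-!
Expand `per (x·I - L)` over permutations and group the permutations by their cycle through `v`.
Those whose cycle at `v` is a given `c` (the identity, a transposition `(v u)`, or a longer
cycle) are exactly `c` glued to an arbitrary permutation of the vertices off `insert v c.support`,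
so each class contributes `∏_a (x·I - L) a (c a)` times the permanental polynomial of the
complementary principal submatrix. Off the diagonal `x·I - L` is the adjacency matrix, so the
identity gives `(x - d(v)) ψ(L_v)`, a transposition `(v u)` gives `ψ(L_{uv})` exactly when `u` is a
neighbour of `v`, and a longer cycle gives `ψ(L_{V(C)})` exactly when it runs along edges of `G`.
These directed cycles cover the cycles `C` of `G` through `v` two-to-one, by their two
orientations; that every `C` arises comes from turning a closed walk around `C` into a cyclic
permutation with `List.formPerm`.
-/

open Equiv Finset

namespace Equiv.Perm

variable {α : Type*} [Fintype α] [DecidableEq α]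

theorem IsCycle.apply_apply_ne {c : Perm α} (hc : c.IsCycle) (h3 : 3 ≤ #c.support) {a : α}
    (ha : a ∈ c.support) : c (c a) ≠ a := by
  intro h
  have hsq : c ^ 2 = 1 := (hc.pow_eq_one_iff' (mem_support.1 ha)).2 (by simpa [sq] using h)
  exact pow_ne_one_of_lt_orderOf two_ne_zero (by rw [hc.orderOf]; omega) hsq

theorem IsCycle.forall_mem_support_of_closed {c : Perm α} (hc : c.IsCycle) {p : α → Prop}
    {v : α} (hv : v ∈ c.support) (hpv : p v) (hp : ∀ a ∈ c.support, p a → p (c a)) :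
    ∀ a ∈ c.support, p a := by
  intro a ha
  obtain ⟨i, rfl⟩ := (hc.sameCycle (mem_support.1 hv) (mem_support.1 ha)).exists_nat_pow_eq
  induction i with
  | zero => exact hpv
  | succ i ih =>
    rw [pow_succ', mul_apply]
    exact hp _ (pow_apply_mem_support.2 hv) (ih (pow_apply_mem_support.2 hv))

theorem card_support_eq_two_iff_eq_swap {c : Perm α} {v : α} (hv : v ∈ c.support) :
    #c.support = 2 ↔ c = swap v (c v) := by
  refine ⟨fun h => ?_, fun h => h ▸ card_support_swap (mem_support.1 hv).symm⟩
  obtain ⟨x, y, hxy, rfl⟩ := card_support_eq_two.1 h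
  rw [support_swap hxy, mem_insert, mem_singleton] at hv
  rcases hv with rfl | rfl
  · rw [swap_apply_left]
  · rw [swap_apply_right, swap_comm]

theorem apply_mem_iff_of_support_subset {c : Perm α} {s : Finset α} (hc : c.support ⊆ s)
    (a : α) : c a ∈ s ↔ a ∈ s := by
  by_cases ha : a ∈ c.support
  · exact iff_of_true (hc (apply_mem_support.2 ha)) (hc ha)
  · rw [notMem_support.1 ha]

theorem apply_mem_iff_of_eqOn {σ c : Perm α} {s : Finset α} (hc : c.support ⊆ s)
    (hσ : ∀ a ∈ s, σ a = c a) (a : α) : σ a ∈ s ↔ a ∈ s := by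
  refine ⟨fun h => ?_, fun h => hσ a h ▸ (apply_mem_iff_of_support_subset hc a).2 h⟩
  have hb : c⁻¹ (σ a) ∈ s := (apply_mem_iff_of_support_subset (support_inv c ▸ hc) _).2 h
  have : σ (c⁻¹ (σ a)) = σ a := (hσ _ hb).trans (c.apply_symm_apply _)
  exact σ.injective this ▸ hb

theorem cycleOf_eq_one_or_isCycle (σ : Perm α) (v : α) :
    σ.cycleOf v = 1 ∨ (σ.cycleOf v).IsCycle ∧ v ∈ (σ.cycleOf v).support := by
  by_cases h : σ v = v
  · exact Or.inl ((cycleOf_eq_one_iff σ).2 h)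
  · exact Or.inr ⟨isCycle_cycleOf σ h, mem_support_cycleOf_iff.2 ⟨.refl _ _, mem_support.2 h⟩⟩

theorem cycleOf_eq_iff_eqOn {σ c : Perm α} {v : α} (hc : c = 1 ∨ c.IsCycle ∧ v ∈ c.support) :
    σ.cycleOf v = c ↔ ∀ a ∈ insert v c.support, σ a = c a := by
  constructor
  · rintro rfl a ha
    rcases mem_insert.1 ha with rfl | ha
    · exact (cycleOf_apply_self σ a).symm
    · exact (mem_support_cycleOf_iff.1 ha).1.cycleOf_apply.symm
  · intro h
    have hρ : ∀ a ∈ insert v c.support, (c⁻¹ * σ) a = a := fun a ha => by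
      rw [mul_apply, h a ha]
      exact c.symm_apply_apply a
    have hdisj : c.Disjoint (c⁻¹ * σ) := fun a => by
      by_cases ha : a ∈ c.support
      · exact Or.inr (hρ a (mem_insert_of_mem ha))
      · exact Or.inl (notMem_support.1 ha)
    rw [← mul_inv_cancel_left c σ,
      cycleOf_mul_of_apply_right_eq_self hdisj.commute v (hρ v (mem_insert_self _ _))]
    rcases hc with rfl | ⟨hcyc, hv⟩
    · exact cycleOf_one v
    · exact hcyc.cycleOf_eq (mem_support.1 hv)

end Equiv.Perm

theorem List.rel_formPerm_of_isChain_cons {α : Type*} [DecidableEq α] {R : α → α → Prop} {v : α}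
    {l : List α} (hl : l.Nodup) (hchain : (v :: l).IsChain R) (hlast : l.getLast? = some v) :
    ∀ x ∈ l, R x (l.formPerm x) := by
  intro x hx
  rw [formPerm_apply_mem_eq_next hl x hx]
  by_cases hxl : x ∈ l.dropLast
  · exact isChain_pair.1 (hchain.tail.infix (nextOr_infix_of_mem_dropLast hxl _))
  · have hne : l ≠ [] := ne_nil_of_mem hx
    have hxv : x = l.getLast hne := by
      rw [← dropLast_append_getLast hne] at hx
      simpa [hxl] using hx
    subst hxv
    rw [getLast?_eq_some_getLast hne, Option.some.injEq] at hlast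
    rw [next_getLast_eq_head l hne hl, hlast]
    cases l with
    | nil => contradiction
    | cons y l => exact (isChain_cons_cons.1 hchain).1

namespace Matrix

variable {α R : Type*} [Fintype α] [DecidableEq α] [CommRing R]

theorem sum_prod_perm_eqOn (M : Matrix α α R) {s : Finset α} {c : Perm α} (hc : c.support ⊆ s) :
    ∑ σ : Perm α with ∀ a ∈ s, σ a = c a, ∏ a, M a (σ a)
      = (∏ a ∈ s, M a (c a)) * (delSub M ↑s).per := by
  have hfix (τ : Perm {a // a ∉ (↑s : Set α)}) {a : α} (ha : a ∈ s) : Perm.ofSubtype τ a = a :=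
    Perm.ofSubtype_apply_of_not_mem τ (not_not.2 ha)
  have hin (τ : Perm {a // a ∉ (↑s : Set α)}) {a : α} (ha : a ∉ s) :
      Perm.ofSubtype τ a = τ ⟨a, ha⟩ :=
    Perm.ofSubtype_apply_of_mem τ ha
  have hout {a : α} (ha : a ∉ s) : c a = a := Perm.notMem_support.1 fun h => ha (hc h)
  rw [per, mul_sum]
  refine sum_bij'
    (fun σ hσ => σ.subtypePerm (p := fun a => a ∉ (↑s : Set α)) fun a =>
      not_congr (Perm.apply_mem_iff_of_eqOn hc (mem_filter.1 hσ).2 a))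
    (fun τ _ => c * Perm.ofSubtype τ) (fun _ _ => mem_univ _)
    (fun τ _ => mem_filter.2 ⟨mem_univ _, fun a ha => by rw [Perm.mul_apply, hfix τ ha]⟩)
    (fun σ hσ => ?_) (fun τ _ => ?_) (fun σ hσ => ?_)
  · ext a
    by_cases ha : a ∈ s
    · rw [Perm.mul_apply, hfix _ ha, (mem_filter.1 hσ).2 a ha]
    · rw [Perm.mul_apply, hin _ ha, Perm.subtypePerm_apply,
        hout ((Perm.apply_mem_iff_of_eqOn hc (mem_filter.1 hσ).2 a).not.2 ha)]
  · ext ⟨a, ha⟩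
    change c (Perm.ofSubtype τ a) = τ ⟨a, ha⟩
    rw [hin _ ha, hout (τ ⟨a, ha⟩).2]
  · rw [← prod_mul_prod_compl s,
      prod_congr rfl fun a ha => congrArg (M a) ((mem_filter.1 hσ).2 a ha)]
    congr 1
    exact prod_subtype _ (fun a => mem_compl) _

theorem per_eq_sum_cycleOf (M : Matrix α α R) (v : α) :
    M.per = ∑ c : Perm α with c = 1 ∨ c.IsCycle ∧ v ∈ c.support,
      (∏ a ∈ insert v c.support, M a (c a)) * (delSub M ↑(insert v c.support)).per := by
  rw [per, ← sum_fiberwise_of_maps_to (g := fun σ : Perm α => σ.cycleOf v)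
    (t := {c : Perm α | c = 1 ∨ c.IsCycle ∧ v ∈ c.support})
    fun σ _ => mem_filter.2 ⟨mem_univ _, σ.cycleOf_eq_one_or_isCycle v⟩]
  refine sum_congr rfl fun c hc => ?_
  rw [← sum_prod_perm_eqOn M (subset_insert v c.support)]
  exact sum_congr (filter_congr fun σ _ => Perm.cycleOf_eq_iff_eqOn (mem_filter.1 hc).2)
    fun _ _ => rfl

end Matrix

theorem SimpleGraph.Subgraph.Connected.verts_subset_of_forall_adj {W : Type*} {G : SimpleGraph W}
    {H : G.Subgraph} (hH : H.Connected) {s : Set W} {x : W} (hx : x ∈ H.verts) (hxs : x ∈ s)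
    (hs : ∀ a b, a ∈ s → H.Adj a b → b ∈ s) : H.verts ⊆ s := by
  intro w hw
  obtain ⟨q⟩ := hH.preconnected ⟨x, hx⟩ ⟨w, hw⟩
  suffices ∀ a b : H.verts, H.coe.Walk a b → a.1 ∈ s → b.1 ∈ s from this _ _ q hxs
  intro a b q
  induction q with
  | nil => exact id
  | cons h _ ih => exact fun ha => ih (hs _ _ ha h)

namespace SimpleGraph

variable (G : SimpleGraph V)

def IsDirectedCycle (c : Perm V) : Prop :=
  c.IsCycle ∧ 3 ≤ #c.support ∧ ∀ a ∈ c.support, G.Adj a (c a)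

def cycleSubgraph (c : Perm V) : G.Subgraph where
  verts := c.support
  Adj a b := G.Adj a b ∧ (c a = b ∨ c b = a)
  adj_sub h := h.1
  edge_vert := by
    rintro a b ⟨hab, h | h⟩
    · exact Perm.mem_support.2 fun h' => hab.ne (h'.symm.trans h)
    · exact h ▸ Perm.apply_mem_support.2 (Perm.mem_support.2 fun h' => hab.ne (h.symm.trans h'))
  symm := ⟨fun _ _ h => ⟨h.1.symm, h.2.symm⟩⟩

variable {G} {c c' : Perm V}

@[simp]
theorem cycleSubgraph_verts (c : Perm V) : (G.cycleSubgraph c).verts = c.support := rfl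

theorem cycleSubgraph_inv (c : Perm V) : G.cycleSubgraph c⁻¹ = G.cycleSubgraph c := by
  ext a b
  · simp
  · simp only [cycleSubgraph, Perm.inv_eq_iff_eq]
    tauto

theorem IsDirectedCycle.mono {G' : SimpleGraph V} (h : G ≤ G') (hc : G.IsDirectedCycle c) :
    G'.IsDirectedCycle c :=
  ⟨hc.1, hc.2.1, fun a ha => h (hc.2.2 a ha)⟩

theorem IsDirectedCycle.support_nonempty (hc : G.IsDirectedCycle c) : c.support.Nonempty :=
  card_pos.1 (by have := hc.2.1; omega)

theorem IsDirectedCycle.apply_apply_ne (hc : G.IsDirectedCycle c) {a : V} (ha : a ∈ c.support) :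
    c (c a) ≠ a :=
  hc.1.apply_apply_ne hc.2.1 ha

theorem IsDirectedCycle.apply_ne_inv_apply (hc : G.IsDirectedCycle c) {a : V}
    (ha : a ∈ c.support) : c a ≠ c⁻¹ a :=
  fun h => hc.apply_apply_ne ha (by rw [h]; exact c.apply_symm_apply a)

theorem IsDirectedCycle.ne_inv (hc : G.IsDirectedCycle c) : c ≠ c⁻¹ := by
  obtain ⟨a, ha⟩ := hc.support_nonempty
  intro h
  exact hc.apply_apply_ne ha ((congrArg (· (c a)) h).trans (c.symm_apply_apply a))

theorem IsDirectedCycle.inv (hc : G.IsDirectedCycle c) : G.IsDirectedCycle c⁻¹ := by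
  refine ⟨hc.1.inv, by rw [Perm.support_inv]; exact hc.2.1, fun a ha => ?_⟩
  rw [Perm.support_inv] at ha
  have hmem : c⁻¹ a ∈ c.support := by
    rwa [← Perm.support_inv, Perm.apply_mem_support, Perm.support_inv]
  simpa using (hc.2.2 _ hmem).symm

theorem Walk.IsCycle.isDirectedCycle_formPerm {v : V} {p : G.Walk v v} (hp : p.IsCycle) :
    G.IsDirectedCycle p.support.tail.formPerm := by
  have hnd := hp.support_nodup
  have hlen : 3 ≤ p.support.tail.length := by simpa using hp.three_le_length
  have hsupp : p.support.tail.formPerm.support = p.support.tail.toFinset :=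
    List.support_formPerm_of_nodup _ hnd fun x h => by simp [h] at hlen
  refine ⟨List.isCycle_formPerm hnd (by omega), by rwa [hsupp, List.toFinset_card_of_nodup hnd],
    fun a ha => ?_⟩
  rw [hsupp, List.mem_toFinset] at ha
  refine List.rel_formPerm_of_isChain_cons (v := v) hnd ?_ ?_ a ha
  · rw [p.cons_tail_support]
    exact p.isChain_adj_support
  · have hne : p.support.tail ≠ [] := List.ne_nil_of_length_pos (by omega)
    rw [List.getLast?_eq_some_getLast hne, List.getLast_tail, p.getLast_support]

theorem neighborSet_cycleSubgraph (hc : G.IsDirectedCycle c) {a : V} (ha : a ∈ c.support) :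
    (G.cycleSubgraph c).neighborSet a = {c a, c⁻¹ a} := by
  ext b
  simp only [Subgraph.mem_neighborSet, cycleSubgraph, Set.mem_insert_iff, Set.mem_singleton_iff,
    Perm.eq_inv_iff_eq]
  constructor
  · rintro ⟨-, h | h⟩
    exacts [Or.inl h.symm, Or.inr h]
  · rintro (rfl | h)
    · exact ⟨hc.2.2 a ha, Or.inl rfl⟩
    · have hb : b ∈ c.support := Perm.apply_mem_support.1 (h ▸ ha)
      exact ⟨h ▸ (hc.2.2 b hb).symm, Or.inr h⟩

theorem isCycleSub_cycleSubgraph (hc : G.IsDirectedCycle c) :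
    IsCycleSub G (G.cycleSubgraph c) := by
  obtain ⟨v, hv⟩ := hc.support_nonempty
  refine ⟨⟨(connected_iff_exists_forall_reachable _).2 ⟨⟨v, hv⟩, fun ⟨a, ha⟩ => ?_⟩⟩, ⟨v, hv⟩,
    fun a ha => ?_⟩
  · obtain ⟨_, h⟩ := hc.1.forall_mem_support_of_closed
      (p := fun a => ∃ ha : a ∈ c.support, (G.cycleSubgraph c).coe.Reachable ⟨v, hv⟩ ⟨a, ha⟩)
      hv ⟨hv, .refl _⟩ (fun a ha hpa => ⟨Perm.apply_mem_support.2 ha,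
        hpa.2.trans (Subgraph.Adj.coe (H := G.cycleSubgraph c) ⟨hc.2.2 a ha, Or.inl rfl⟩).reachable⟩)
      a ha
    exact h
  · rw [neighborSet_cycleSubgraph hc ha]
    exact Set.ncard_pair (hc.apply_ne_inv_apply ha)

theorem IsDirectedCycle.eq_of_cycleSubgraph_eq (hc : G.IsDirectedCycle c)
    (hc' : G.IsDirectedCycle c') (h : G.cycleSubgraph c = G.cycleSubgraph c') {v : V}
    (hv : v ∈ c.support) (hcv : c v = c' v) : c = c' := by
  have hsupp : c.support = c'.support := Finset.coe_injective (congrArg Subgraph.verts h)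
  have key := hc.1.forall_mem_support_of_closed (p := fun a => c a = c' a) hv hcv
    fun a ha hca => by
      have hmem : c' (c a) ∈ (G.cycleSubgraph c).neighborSet (c a) := by
        rw [h]
        exact ⟨hc'.2.2 _ (hsupp ▸ Perm.apply_mem_support.2 ha), Or.inl rfl⟩
      rw [neighborSet_cycleSubgraph hc (Perm.apply_mem_support.2 ha)] at hmem
      rcases hmem with h1 | h1
      · exact h1.symm
      · refine absurd ?_ (hc'.apply_apply_ne (hsupp ▸ ha))
        rw [← hca]
        exact h1.trans (c.symm_apply_apply a)
  ext a
  by_cases ha : a ∈ c.support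
  · exact key a ha
  · rw [Perm.notMem_support.1 ha, Perm.notMem_support.1 (hsupp ▸ ha)]

theorem neighborSet_eq_of_isDirectedCycle_spanningCoe {C : G.Subgraph}
    (hc : C.spanningCoe.IsDirectedCycle c) {a : V} (ha : a ∈ c.support)
    (hdeg : (C.neighborSet a).ncard = 2) : C.neighborSet a = {c a, c⁻¹ a} := by
  refine (Set.eq_of_subset_of_ncard_le ?_ ?_ (Set.toFinite _)).symm
  · rintro b (rfl | rfl)
    · exact hc.2.2 a ha
    · exact hc.inv.2.2 a (by rwa [Perm.support_inv])
  · rw [hdeg, Set.ncard_pair (hc.apply_ne_inv_apply ha)]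

theorem cycleSubgraph_eq_of_isDirectedCycle_spanningCoe {C : G.Subgraph} (hC : IsCycleSub G C)
    (hc : C.spanningCoe.IsDirectedCycle c) : G.cycleSubgraph c = C := by
  obtain ⟨hconn, -, hdeg⟩ := hC
  have hsub : ↑c.support ⊆ C.verts := fun a ha => C.edge_vert (hc.2.2 a ha)
  have hnbr (a : V) (ha : a ∈ c.support) :
      (G.cycleSubgraph c).neighborSet a = C.neighborSet a := by
    rw [neighborSet_cycleSubgraph (hc.mono C.spanningCoe_le) ha,
      neighborSet_eq_of_isDirectedCycle_spanningCoe hc ha (hdeg a (hsub ha))]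
  have hclosed (a b : V) (ha : a ∈ c.support) (hab : C.Adj a b) : b ∈ c.support := by
    have hab' : (G.cycleSubgraph c).Adj a b := by
      rw [← Subgraph.mem_neighborSet, hnbr a ha]
      exact hab
    exact (G.cycleSubgraph c).edge_vert hab'.symm
  obtain ⟨x, hx⟩ := hc.support_nonempty
  have hverts : C.verts = c.support :=
    (hconn.verts_subset_of_forall_adj (hsub hx) hx hclosed).antisymm hsub
  ext a b
  · exact hverts.symm ▸ Iff.rfl
  · by_cases ha : a ∈ c.support
    · exact Set.ext_iff.1 (hnbr a ha) b
    · exact iff_of_false (fun h => ha ((G.cycleSubgraph c).edge_vert h))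
        fun h => ha (by simpa [hverts] using C.edge_vert h)

theorem exists_cycleSubgraph_eq {C : G.Subgraph} (hC : IsCycleSub G C) :
    ∃ c, G.IsDirectedCycle c ∧ G.cycleSubgraph c = C := by
  obtain ⟨v, hv⟩ := hC.2.1
  have hcycles : C.spanningCoe.IsCycles := fun a ⟨_, hab⟩ => hC.2.2 a (C.edge_vert hab)
  obtain ⟨p, hp, -⟩ := hcycles.exists_cycle_toSubgraph_verts_eq_connectedComponentSupp
    (c := C.spanningCoe.connectedComponentMk v) rfl
    (Set.nonempty_of_ncard_ne_zero (by rw [hC.2.2 v hv]; norm_num) : (C.neighborSet v).Nonempty)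
  exact ⟨_, hp.isDirectedCycle_formPerm.mono C.spanningCoe_le,
    cycleSubgraph_eq_of_isDirectedCycle_spanningCoe hC hp.isDirectedCycle_formPerm⟩

theorem filter_cycleSubgraph_eq {v : V} (hc : G.IsDirectedCycle c) (hv : v ∈ c.support) :
    {c' ∈ univ.filter (fun c => G.IsDirectedCycle c ∧ v ∈ c.support) |
      G.cycleSubgraph c' = G.cycleSubgraph c} = {c, c⁻¹} := by
  ext c'
  simp only [mem_filter, mem_univ, true_and, mem_insert, mem_singleton]
  constructor
  · rintro ⟨⟨hc', hv'⟩, h⟩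
    have hmem : c' v ∈ (G.cycleSubgraph c).neighborSet v := h ▸ ⟨hc'.2.2 v hv', Or.inl rfl⟩
    rw [neighborSet_cycleSubgraph hc hv] at hmem
    rcases hmem with h1 | h1
    · exact Or.inl (hc'.eq_of_cycleSubgraph_eq hc h hv' h1)
    · exact Or.inr (hc'.eq_of_cycleSubgraph_eq hc.inv (h.trans (cycleSubgraph_inv c).symm) hv' h1)
  · rintro (rfl | rfl)
    · exact ⟨⟨hc, hv⟩, rfl⟩
    · exact ⟨⟨hc.inv, by rwa [Perm.support_inv]⟩, cycleSubgraph_inv c⟩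

variable (G) {M : Type*} [AddCommMonoid M]

theorem sum_isDirectedCycle_eq_two_nsmul_finsum (f : Set V → M) (v : V) :
    ∑ c : Perm V with G.IsDirectedCycle c ∧ v ∈ c.support, f c.support
      = 2 • ∑ᶠ C ∈ {C : G.Subgraph | IsCycleSub G C ∧ v ∈ C.verts}, f C.verts := by
  have himage : {C : G.Subgraph | IsCycleSub G C ∧ v ∈ C.verts}
      = ↑((univ.filter fun c => G.IsDirectedCycle c ∧ v ∈ c.support).image G.cycleSubgraph) := by
    ext C
    simp only [Set.mem_ofPred_eq, coe_image, Set.mem_image, mem_coe, mem_filter, mem_univ,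
      true_and]
    constructor
    · rintro ⟨hC, hv⟩
      obtain ⟨c, hc, rfl⟩ := exists_cycleSubgraph_eq hC
      exact ⟨c, ⟨hc, hv⟩, rfl⟩
    · rintro ⟨c, ⟨hc, hv⟩, rfl⟩
      exact ⟨isCycleSub_cycleSubgraph hc, hv⟩
  rw [himage, finsum_mem_coe_finset, smul_sum,
    ← sum_fiberwise_of_maps_to fun c hc => mem_image_of_mem G.cycleSubgraph hc]
  refine sum_congr rfl fun C hC => ?_
  obtain ⟨c, hc, rfl⟩ := mem_image.1 hC
  rw [filter_cycleSubgraph_eq (mem_filter.1 hc).2.1 (mem_filter.1 hc).2.2,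
    sum_pair (mem_filter.1 hc).2.1.ne_inv, Perm.support_inv, two_nsmul, cycleSubgraph_verts]

variable [DecidableRel G.Adj]

theorem sum_isCycle_card_support_eq_two (f : Set V → M) (v : V) :
    ∑ c ∈ {c : Perm V | c.IsCycle ∧ v ∈ c.support} with #c.support = 2,
      (if ∀ a ∈ c.support, G.Adj a (c a) then f c.support else 0)
      = ∑ u ∈ G.neighborFinset v, f {u, v} := by
  rw [← sum_filter]
  refine sum_nbij' (fun c => c v) (swap v) (fun c hc => ?_) (fun u hu => ?_) (fun c hc => ?_)
    (fun u _ => swap_apply_left v u) (fun c hc => ?_)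
  · simp only [mem_filter, mem_univ, true_and] at hc
    exact (mem_neighborFinset G v _).2 (hc.2 v hc.1.1.2)
  · have hadj := (mem_neighborFinset G v u).1 hu
    have hsupp := Perm.support_swap hadj.ne
    refine mem_filter.2 ⟨mem_filter.2 ⟨mem_filter.2 ⟨mem_univ _, Perm.isCycle_swap hadj.ne,
      by simp [hsupp]⟩, Perm.card_support_swap hadj.ne⟩, fun a ha => ?_⟩
    rcases mem_insert.1 (hsupp ▸ ha) with rfl | ha
    · rwa [swap_apply_left]
    · rw [mem_singleton.1 ha, swap_apply_right]
      exact hadj.symm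
  · simp only [mem_filter, mem_univ, true_and] at hc
    exact ((Perm.card_support_eq_two_iff_eq_swap hc.1.1.2).1 hc.1.2).symm
  · simp only [mem_filter, mem_univ, true_and] at hc
    rw [(Perm.card_support_eq_two_iff_eq_swap hc.1.1.2).1 hc.1.2,
      Perm.support_swap (Perm.mem_support.1 hc.1.1.2).symm, swap_apply_left, coe_pair,
      Set.pair_comm]

theorem sum_isCycle_card_support_ne_two (f : Set V → M) (v : V) :
    ∑ c ∈ {c : Perm V | c.IsCycle ∧ v ∈ c.support} with ¬#c.support = 2,
      (if ∀ a ∈ c.support, G.Adj a (c a) then f c.support else 0)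
      = ∑ c : Perm V with G.IsDirectedCycle c ∧ v ∈ c.support, f c.support := by
  rw [← sum_filter, filter_filter, filter_filter]
  refine sum_congr (filter_congr fun c _ => ?_) fun _ _ => rfl
  unfold IsDirectedCycle
  constructor
  · rintro ⟨⟨hc, hv⟩, h2, hadj⟩
    exact ⟨⟨hc, by have := hc.two_le_card_support; omega, hadj⟩, hv⟩
  · rintro ⟨⟨hc, h3, hadj⟩, hv⟩
    exact ⟨⟨hc, hv⟩, by omega, hadj⟩

end SimpleGraph

section Laplacian

variable {R : Type*} [CommRing R]

theorem psi_delSub_eq_per {n : Type*} [DecidableEq n] (M : Matrix n n R[X]) {S T : Set n}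
    (h : S = T) {F : Fintype {a // a ∉ S}} {D : DecidableEq {a // a ∉ S}}
    {F' : Fintype {a // a ∉ T}} {D' : DecidableEq {a // a ∉ T}} :
    @psi _ _ F D _ (delSub M S)
      = @Matrix.per _ _ F' D' _ (delSub ((X : R[X]) • (1 : Matrix n n R[X]) - M) T) := by
  subst h
  obtain rfl := Subsingleton.elim F F'
  obtain rfl := Subsingleton.elim D D'
  rw [psi, delSub, delSub]
  congr 1
  ext a b
  simp [Matrix.one_apply, Subtype.val_inj]

variable (R) (G : SimpleGraph V) [DecidableRel G.Adj]

def lapCharmatrix : Matrix V V R[X] :=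
  (X : R[X]) • (1 : Matrix V V R[X]) - lapMat R[X] G

/-- `S ↦ ψ(L_S(G))`, with one `Fintype` instance on `{a // a ∉ S}` chosen uniformly in `S`;
instance search finds different ones for particular `S` such as `{v}` or `↑c.support`, and
`psiLapDelSub_eq` converts between them. -/
def psiLapDelSub (S : Set V) : R[X] :=
  psi (delSub (lapMat R[X] G) S)

variable {R}

theorem psiLapDelSub_eq {S : Set V} {F : Fintype {a // a ∉ S}} {D : DecidableEq {a // a ∉ S}} :
    psiLapDelSub R G S = @psi _ _ F D _ (delSub (lapMat R[X] G) S) := by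
  unfold psiLapDelSub
  congr <;> exact Subsingleton.elim _ _

theorem lapCharmatrix_apply_self (a : V) :
    lapCharmatrix R G a a = X - (G.degree a : R[X]) := by
  simp [lapCharmatrix, lapMat, degMat]

theorem lapCharmatrix_apply_of_ne {a b : V} (h : a ≠ b) :
    lapCharmatrix R G a b = if G.Adj a b then 1 else 0 := by
  simp [lapCharmatrix, lapMat, degMat, h]

theorem prod_lapCharmatrix_apply {s : Finset V} {f : V → V} (hf : ∀ a ∈ s, f a ≠ a) :
    ∏ a ∈ s, lapCharmatrix R G a (f a) = if ∀ a ∈ s, G.Adj a (f a) then 1 else 0 := by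
  rw [prod_congr rfl fun a ha => lapCharmatrix_apply_of_ne G (hf a ha).symm]
  convert prod_boole

theorem prod_lapCharmatrix_mul_per_delSub {c : Perm V} {v : V} (hv : v ∈ c.support) :
    (∏ a ∈ insert v c.support, lapCharmatrix R G a (c a))
        * (delSub (lapCharmatrix R G) ↑(insert v c.support)).per
      = if ∀ a ∈ c.support, G.Adj a (c a) then psiLapDelSub R G c.support else 0 := by
  rw [insert_eq_of_mem hv, prod_lapCharmatrix_apply G fun a ha => Perm.mem_support.1 ha,
    ite_mul, one_mul, zero_mul, psiLapDelSub, psi_delSub_eq_per _ rfl]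
  rfl

theorem psi_lapMat_eq (v : V) :
    psi (lapMat R[X] G) = (X - (G.degree v : R[X])) * psiLapDelSub R G {v}
      + ∑ u ∈ G.neighborFinset v, psiLapDelSub R G {u, v}
      + ∑ c : Perm V with G.IsDirectedCycle c ∧ v ∈ c.support, psiLapDelSub R G c.support := by
  have hK : univ.filter (fun c : Perm V => c = 1 ∨ c.IsCycle ∧ v ∈ c.support)
      = insert 1 (univ.filter fun c : Perm V => c.IsCycle ∧ v ∈ c.support) := by
    ext c
    simp
  have hone : (∏ a ∈ insert v (1 : Perm V).support, lapCharmatrix R G a ((1 : Perm V) a))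
        * (delSub (lapCharmatrix R G) ↑(insert v (1 : Perm V).support)).per
      = (X - (G.degree v : R[X])) * psiLapDelSub R G {v} := by
    rw [Perm.support_one, insert_empty, prod_singleton, Perm.one_apply,
      lapCharmatrix_apply_self, psiLapDelSub, psi_delSub_eq_per _ (coe_singleton v).symm]
    rfl
  rw [show psi (lapMat R[X] G) = (lapCharmatrix R G).per from rfl, Matrix.per_eq_sum_cycleOf _ v,
    hK, sum_insert fun h => (mem_filter.1 h).2.1.ne_one rfl, hone, add_assoc,
    sum_congr rfl fun c hc => prod_lapCharmatrix_mul_per_delSub G (mem_filter.1 hc).2.2,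
    ← sum_filter_add_sum_filter_not _ fun c => #c.support = 2,
    G.sum_isCycle_card_support_eq_two (psiLapDelSub R G) v,
    G.sum_isCycle_card_support_ne_two (psiLapDelSub R G) v]

end Laplacian

theorem laplacian_permanental_vertex_recursion
    {V : Type*} [Fintype V] [DecidableEq V]
    (G : SimpleGraph V) [DecidableRel G.Adj] (v : V) :
    psi (lapMat (Polynomial ℤ) G) =
      (Polynomial.X - (G.degree v : Polynomial ℤ)) * psi (delSub (lapMat (Polynomial ℤ) G) {v})
        + ∑ u ∈ G.neighborFinset v, psi (delSub (lapMat (Polynomial ℤ) G) {u, v})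
        + 2 * ∑ᶠ C ∈ {C : G.Subgraph | IsCycleSub G C ∧ v ∈ C.verts},
          psi (delSub (lapMat (Polynomial ℤ) G) C.verts) := by
  rw [psi_lapMat_eq G v, G.sum_isDirectedCycle_eq_two_nsmul_finsum (psiLapDelSub ℤ G) v,
    nsmul_eq_mul, Nat.cast_ofNat]
  simp only [← psiLapDelSub_eq]
end
end

section
/- Let G be a bipartite simple graph on a finite vertex type. Then the permanental polynomials of its Laplacian and signless Laplacian matrices coincide: ψ(L(G)) = ψ(Q(G)). -/
open Polynomial Matrix

attribute [local instance] Classical.propDecidable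

noncomputable section

variable {V : Type*}

variable [Fintype V] [DecidableEq V]

/-- The signless Laplacian matrix `Q(G) = D(G) + A(G)`. -/
def qMat (R : Type*) [CommRing R] (G : SimpleGraph V) [DecidableRel G.Adj] :
    Matrix V V R :=
  degMat R G + G.adjMatrix R


lemma per_conj {n R : Type*} [Fintype n] [DecidableEq n] [CommRing R]
    (M : Matrix n n R) (e : n → R) (h : ∀ i, e i * e i = 1) :
    (Matrix.of fun u v => e u * e v * M u v).per = M.per := by
  unfold Matrix.per
  refine Finset.sum_congr rfl fun σ _ => ?_
  simp only [Matrix.of_apply]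
  calc (∏ i, e i * e (σ i) * M i (σ i))
      = ((∏ i, e i) * ∏ i, e (σ i)) * ∏ i, M i (σ i) := by
        rw [← Finset.prod_mul_distrib, ← Finset.prod_mul_distrib]
    _ = (∏ i, e i * e i) * ∏ i, M i (σ i) := by
        rw [Equiv.prod_comp σ e, Finset.prod_mul_distrib]
    _ = ∏ i, M i (σ i) := by simp [h]

theorem bipartite_laplacian_signless_permanental_eq
    {V : Type*} [Fintype V] [DecidableEq V]
    (G : SimpleGraph V) [DecidableRel G.Adj] (hG : G.Colorable 2) :
    psi (lapMat (Polynomial ℤ) G) = psi (qMat (Polynomial ℤ) G) := by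
  obtain ⟨c⟩ := hG
  set e : V → Polynomial ℤ := fun v => if c v = 0 then 1 else -1 with he
  have hsq : ∀ v, e v * e v = 1 := by
    intro v; simp only [he]; split <;> ring
  have hadj : ∀ u v, G.Adj u v → e u * e v = -1 := by
    intro u v h
    have hne := c.valid h
    simp only [he]
    by_cases h0 : c u = 0
    · have hv0 : ¬ c v = 0 := fun hv => hne (h0.trans hv.symm)
      simp [h0, hv0]
    · have hv0 : c v = 0 := by omega
      simp [h0, hv0]
  have key : ((Polynomial.X : Polynomial ℤ) • (1 : Matrix V V (Polynomial ℤ))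
        - lapMat (Polynomial ℤ) G)
      = Matrix.of (fun u v => e u * e v *
          (((Polynomial.X : Polynomial ℤ) • (1 : Matrix V V (Polynomial ℤ))
            - qMat (Polynomial ℤ) G) u v)) := by
    ext u v
    by_cases huv : u = v
    · subst huv
      simp only [Matrix.of_apply, Matrix.sub_apply, Matrix.smul_apply, Matrix.one_apply_eq,
        lapMat, qMat, degMat, Matrix.add_apply, Matrix.diagonal_apply_eq,
        SimpleGraph.adjMatrix_apply, if_neg (G.irrefl (v := u)), smul_eq_mul, mul_one]
      rw [mul_assoc, ← mul_assoc (e u), hsq]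
      ring
    · have h1 : (1 : Matrix V V (Polynomial ℤ)) u v = 0 := Matrix.one_apply_ne huv
      simp only [Matrix.of_apply, Matrix.sub_apply, Matrix.smul_apply, h1, smul_zero,
        lapMat, qMat, degMat, Matrix.add_apply, Matrix.diagonal_apply_ne _ huv,
        SimpleGraph.adjMatrix_apply, zero_sub, zero_add, neg_sub, zero_sub, mul_neg]
      by_cases hadjuv : G.Adj u v
      · rw [if_pos hadjuv, hadj u v hadjuv]; ring
      · rw [if_neg hadjuv]; ring
  show ((Polynomial.X : Polynomial ℤ) • (1 : Matrix V V (Polynomial ℤ))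
      - lapMat (Polynomial ℤ) G).per = _
  rw [key, per_conj _ _ hsq]
  rfl
end
end

section
/- Let G be a bipartite simple graph on a finite vertex type. Then the characteristic polynomials of its Laplacian and signless Laplacian matrices coincide: φ(L(G)) = φ(Q(G)). -/
open Polynomial Matrix

attribute [local instance] Classical.propDecidable

noncomputable section

variable {V : Type*}

variable [Fintype V] [DecidableEq V]

theorem bipartite_laplacian_signless_charpoly_eq
    {V : Type*} [Fintype V] [DecidableEq V]
    (G : SimpleGraph V) [DecidableRel G.Adj] (hG : G.Colorable 2) :
    phi (lapMat (Polynomial ℤ) G) = phi (qMat (Polynomial ℤ) G) := by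
  obtain ⟨c⟩ := hG
  set s : V → Polynomial ℤ := fun v => (-1 : Polynomial ℤ) ^ ((c v : Fin 2) : ℕ) with hs
  have hs2 : ∀ v, s v * s v = 1 := by
    intro v
    simp [hs, ← pow_add, ← two_mul, pow_mul]
  set S : Matrix V V (Polynomial ℤ) := Matrix.diagonal s with hS
  have hSS : S * S = 1 := by
    rw [hS, Matrix.diagonal_mul_diagonal]
    ext i j
    by_cases h : i = j <;> simp [h, hs2, Matrix.one_apply]
  have key : S * ((Polynomial.X : Polynomial ℤ) • (1 : Matrix V V (Polynomial ℤ))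
      - qMat (Polynomial ℤ) G) * S
      = (Polynomial.X : Polynomial ℤ) • (1 : Matrix V V (Polynomial ℤ))
      - lapMat (Polynomial ℤ) G := by
    ext i j
    rw [hS, Matrix.mul_diagonal, Matrix.diagonal_mul]
    by_cases h : i = j
    · subst h
      simp [qMat, lapMat, degMat, Matrix.one_apply, mul_comm, mul_assoc, hs2,
        mul_left_comm (s i)]
    · by_cases hadj : G.Adj i j
      · have hne : c i ≠ c j := c.valid hadj
        have hsum : ((c i : Fin 2) : ℕ) + ((c j : Fin 2) : ℕ) = 1 := by
          have h1 : ((c i : Fin 2) : ℕ) < 2 := (c i).isLt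
          have h2 : ((c j : Fin 2) : ℕ) < 2 := (c j).isLt
          have h3 : ((c i : Fin 2) : ℕ) ≠ ((c j : Fin 2) : ℕ) := fun hc => hne (Fin.ext hc)
          omega
        have hneg : s i * s j = -1 := by
          rw [hs]
          simp only [← pow_add, hsum, pow_one]
        simp only [qMat, lapMat, degMat, Matrix.sub_apply, Matrix.add_apply,
          Matrix.smul_apply, Matrix.one_apply_ne h, Matrix.diagonal_apply_ne _ h,
          SimpleGraph.adjMatrix_apply, if_pos hadj, smul_zero, zero_sub, zero_add]
        rw [mul_comm (s i), mul_assoc, hneg]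
        ring
      · simp [qMat, lapMat, degMat, Matrix.one_apply_ne h, Matrix.diagonal_apply_ne _ h,
          hadj]
  have hdet := congrArg Matrix.det key
  rw [Matrix.det_mul, Matrix.det_mul] at hdet
  have hdetS : S.det * S.det = 1 := by
    rw [← Matrix.det_mul, hSS, Matrix.det_one]
  unfold phi
  rw [← hdet]
  ring_nf
  rw [sq, hdetS, one_mul]
end
end

section
/- Let T be a tree on a finite vertex type, let β and γ be real numbers, let H(T) = β·D(T) + γ·A(T), and let v be a vertex of T. Then det(x·I − H(T)) = (x − β·d(v))·det(x·I − H_v(T)) − γ²·Σ_{u ∈ N(v)} det(x·I − H_{uv}(T)). -/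
open Polynomial Matrix

attribute [local instance] Classical.propDecidable

noncomputable section

variable {V : Type*}

variable [Fintype V] [DecidableEq V]

/-- The linear combination matrix `H(G) = β·D(G) + γ·A(G)` over `ℝ[x]`. -/
def hMat (β γ : ℝ) (G : SimpleGraph V) [DecidableRel G.Adj] :
    Matrix V V (Polynomial ℝ) :=
  Polynomial.C β • degMat (Polynomial ℝ) G + Polynomial.C γ • G.adjMatrix (Polynomial ℝ)

/-!
Expand `det (x • 1 - H)` over permutations. The entry `(σ i, i)` vanishes unless `σ i = i` or
`σ i` is adjacent to `i`, so a surviving permutation moves every vertex along an edge of `T`. As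
`T` is acyclic, such a permutation is an involution: the orbit of `σ v` would otherwise lead
back to `v` without crossing the bridge `s(v, σ v)`. Grouping the terms by `σ v`, those with
`σ v = v` give `(x - β d(v)) · det (x • 1 - H_v)`. Among those with `σ v = u ≠ v` only the
permutations agreeing with the transposition `(u v)` on `{u, v}` survive, and they give
`-γ² · det (x • 1 - H_{uv})` when `u ∈ N(v)` and nothing otherwise.
-/

theorem Equiv.Perm.involutive_of_isAcyclic {V : Type*} [Finite V]
    {G : SimpleGraph V} (hG : G.IsAcyclic) {σ : Equiv.Perm V}
    (hσ : ∀ i, σ i ≠ i → G.Adj i (σ i)) : Function.Involutive σ := by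
  intro v
  by_contra hσσ
  have hσv : σ v ≠ v := fun h ↦ hσσ (by rw [h, h])
  set H := G.deleteEdges {s(v, σ v)}
  have hbridge : ¬ H.Reachable v (σ v) :=
    SimpleGraph.isAcyclic_iff_forall_adj_isBridge.mp hG (hσ v hσv)
  have hreach_apply : ∀ w, w ≠ v → H.Reachable (σ v) w → H.Reachable (σ v) (σ w) := by
    intro w hwv hw
    by_cases hfix : σ w = w
    · rwa [hfix]
    refine hw.trans (SimpleGraph.Adj.reachable ?_)
    rw [SimpleGraph.deleteEdges_adj]
    refine ⟨hσ w hfix, ?_⟩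
    rw [Set.mem_singleton_iff, Sym2.eq_iff]
    rintro (⟨rfl, -⟩ | ⟨rfl, h⟩)
    exacts [hwv rfl, hσσ h]
  have hreach_pow : ∀ n : ℕ, H.Reachable (σ v) v ∨ H.Reachable (σ v) ((σ ^ n) (σ v)) := by
    intro n
    induction n with
    | zero => exact Or.inr SimpleGraph.Reachable.rfl
    | succ n ih =>
      rcases ih with h | h
      · exact Or.inl h
      by_cases hv : (σ ^ n) (σ v) = v
      · exact Or.inl (hv ▸ h :)
      · rw [pow_succ', Equiv.Perm.mul_apply]
        exact Or.inr (hreach_apply _ hv h)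
  obtain ⟨n, -, hn⟩ :=
    (Equiv.Perm.sameCycle_apply_left.mpr (Equiv.Perm.SameCycle.refl σ v)).exists_pow_eq'
  rcases hreach_pow n with h | h
  · exact hbridge h.symm
  · exact hbridge (hn ▸ h).symm

namespace Matrix

open Equiv

theorem involutive_of_prod_perm_ne_zero {V R : Type*} [Fintype V] [CommRing R]
    {G : SimpleGraph V} {M : Matrix V V R} (hG : G.IsAcyclic)
    (hM : ∀ i j, i ≠ j → ¬ G.Adj i j → M i j = 0) {σ : Perm V}
    (hσ : ∏ i, M (σ i) i ≠ 0) : Function.Involutive σ :=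
  σ.involutive_of_isAcyclic hG fun i hi ↦ by
    by_contra hadj
    exact hσ (Finset.prod_eq_zero (Finset.mem_univ i) (hM _ _ hi fun h ↦ hadj h.symm))

variable {V R : Type*} [Fintype V] [DecidableEq V] [CommRing R]

theorem sum_perm_eqOn_eq_mul_det_delSub (M : Matrix V V R) (S : Set V) [DecidablePred (· ∈ S)]
    (π : Perm V) (hπ : ∀ i ∉ S, π i = i) :
    ∑ σ ∈ Finset.univ.filter (fun σ : Perm V ↦ ∀ i ∈ S, σ i = π i),
        Perm.sign σ • ∏ i, M (σ i) i
      = Perm.sign π • (∏ i : S, M (π i) i) * (delSub M S).det := by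
  rw [det_apply, Finset.mul_sum]
  symm
  refine Finset.sum_bij (fun τ _ ↦ π * Perm.ofSubtype τ) ?_ ?_ ?_ ?_
  · intro τ _
    simp only [Finset.mem_filter, Finset.mem_univ, true_and, Perm.mul_apply]
    intro i hi
    rw [Perm.ofSubtype_apply_of_not_mem τ (not_not.mpr hi)]
  · intro τ₁ _ τ₂ _ h
    exact Perm.ofSubtype_injective (mul_left_cancel h)
  · intro σ hσ
    have hfix : ∀ i, ¬ (i ∉ S) → (π⁻¹ * σ) i = i := fun i hi ↦ by
      rw [Perm.mul_apply, (Finset.mem_filter.mp hσ).2 i (not_not.mp hi), Perm.inv_eq_iff_eq]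
    refine ⟨(Perm.subtypeEquivSubtypePerm _).symm ⟨π⁻¹ * σ, hfix⟩, Finset.mem_univ _, ?_⟩
    have := congrArg Subtype.val
      ((Perm.subtypeEquivSubtypePerm (· ∉ S)).apply_symm_apply ⟨π⁻¹ * σ, hfix⟩)
    simp only [Perm.subtypeEquivSubtypePerm_apply_coe] at this
    rw [this, mul_inv_cancel_left]
  · intro τ _
    have hprod : ∏ i, M ((π * Perm.ofSubtype τ) i) i
        = (∏ i : S, M (π i) i) * ∏ i, delSub M S (τ i) i := by
      rw [← Fintype.prod_subtype_mul_prod_subtype (· ∈ S)]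
      congr 1
      · refine Fintype.prod_congr _ _ fun i ↦ ?_
        rw [Perm.mul_apply, Perm.ofSubtype_apply_of_not_mem τ (not_not.mpr i.2)]
      · refine Fintype.prod_congr _ _ fun i ↦ ?_
        rw [Perm.mul_apply, Perm.ofSubtype_apply_of_mem τ i.2, hπ _ (τ _).2]
        rfl
    rw [map_mul, Perm.sign_ofSubtype, mul_smul, hprod, smul_mul_assoc, mul_smul_comm]

theorem sum_perm_apply_self_eq_mul_det_delSub (M : Matrix V V R) (v : V) :
    ∑ σ ∈ Finset.univ.filter (fun σ : Perm V ↦ σ v = v), Perm.sign σ • ∏ i, M (σ i) i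
      = M v v * (delSub M {v}).det := by
  simpa using M.sum_perm_eqOn_eq_mul_det_delSub {v} 1 (by simp)

theorem sum_perm_eqOn_swap_eq_neg_mul_det_delSub (M : Matrix V V R) {u v : V} (huv : u ≠ v) :
    ∑ σ ∈ Finset.univ.filter (fun σ : Perm V ↦ ∀ i ∈ ({u, v} : Set V), σ i = Equiv.swap u v i),
        Perm.sign σ • ∏ i, M (σ i) i
      = -(M u v * M v u * (delSub M {u, v}).det) := by
  have hswap : ∀ i ∉ ({u, v} : Set V), Equiv.swap u v i = i := fun i hi ↦ by
    simp only [Set.mem_insert_iff, Set.mem_singleton_iff, not_or] at hi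
    exact swap_apply_of_ne_of_ne hi.1 hi.2
  rw [M.sum_perm_eqOn_eq_mul_det_delSub _ _ hswap, Perm.sign_swap huv,
    Finset.prod_set_coe (f := fun i ↦ M (Equiv.swap u v i) i)]
  simp only [Set.toFinset_insert, Set.toFinset_singleton, Finset.prod_pair huv, swap_apply_left,
    swap_apply_right, Units.neg_smul, one_smul, neg_mul, neg_inj]
  ring

section Acyclic

variable {G : SimpleGraph V} {M : Matrix V V R}

theorem sum_perm_apply_eq_of_isAcyclic (hG : G.IsAcyclic)
    (hM : ∀ i j, i ≠ j → ¬ G.Adj i j → M i j = 0) {u v : V} (huv : u ≠ v) :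
    ∑ σ ∈ Finset.univ.filter (fun σ : Perm V ↦ σ v = u), Perm.sign σ • ∏ i, M (σ i) i
      = -(M u v * M v u * (delSub M {u, v}).det) := by
  rw [← M.sum_perm_eqOn_swap_eq_neg_mul_det_delSub huv]
  refine (Finset.sum_subset (fun σ hσ ↦ ?_) fun σ hσ hσ' ↦ ?_).symm
  · simp only [Finset.mem_filter, Finset.mem_univ, true_and] at hσ ⊢
    simpa using hσ v (by simp)
  · simp only [Finset.mem_filter, Finset.mem_univ, true_and] at hσ hσ'
    refine smul_eq_zero_of_right _ (by_contra fun hprod ↦ hσ' ?_)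
    have hσu : σ u = v := hσ ▸ involutive_of_prod_perm_ne_zero hG hM hprod v
    simp [hσ, hσu]

theorem det_eq_sub_sum_of_isAcyclic [DecidableRel G.Adj] (hG : G.IsAcyclic)
    (hM : ∀ i j, i ≠ j → ¬ G.Adj i j → M i j = 0) (v : V) :
    M.det = M v v * (delSub M {v}).det
      - ∑ u ∈ G.neighborFinset v, M u v * M v u * (delSub M {u, v}).det := by
  have hneighbor : G.neighborFinset v ⊆ Finset.univ.erase v := fun u hu ↦
    Finset.mem_erase.mpr ⟨(G.ne_of_adj ((G.mem_neighborFinset v u).mp hu)).symm, Finset.mem_univ u⟩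
  have hnonadj : ∀ u ∈ Finset.univ.erase v, u ∉ G.neighborFinset v →
      -(M u v * M v u * (delSub M {u, v}).det) = 0 := fun u hu hadj ↦ by
    rw [hM u v (Finset.ne_of_mem_erase hu) fun h ↦ hadj ((G.mem_neighborFinset v u).mpr h.symm)]
    ring
  calc M.det
      = ∑ u, ∑ σ ∈ Finset.univ.filter (fun σ : Perm V ↦ σ v = u), Perm.sign σ • ∏ i, M (σ i) i :=
        (det_apply M).trans (Finset.sum_fiberwise _ _ _).symm
    _ = M v v * (delSub M {v}).det
          + ∑ u ∈ Finset.univ.erase v, -(M u v * M v u * (delSub M {u, v}).det) := by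
        rw [← Finset.add_sum_erase _ _ (Finset.mem_univ v), sum_perm_apply_self_eq_mul_det_delSub]
        exact congrArg _ (Finset.sum_congr rfl fun u hu ↦
          sum_perm_apply_eq_of_isAcyclic hG hM (Finset.ne_of_mem_erase hu))
    _ = _ := by
        rw [← Finset.sum_subset hneighbor hnonadj, Finset.sum_neg_distrib, sub_eq_add_neg]

end Acyclic

end Matrix

theorem phi_delSub {n R : Type*} [Fintype n] [DecidableEq n] [CommRing R]
    (M : Matrix n n R[X]) (S : Set n) [DecidablePred (· ∈ S)] :
    phi (delSub M S) = (delSub ((X : R[X]) • (1 : Matrix n n R[X]) - M) S).det := by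
  simp [phi, delSub, submatrix_sub, submatrix_smul, submatrix_one _ Subtype.val_injective]

theorem hMat_apply_self {V : Type*} [Fintype V] [DecidableEq V] (β γ : ℝ)
    (G : SimpleGraph V) [DecidableRel G.Adj] (w : V) :
    hMat β γ G w w = C β * (G.degree w : ℝ[X]) := by
  simp [hMat, degMat]

theorem hMat_apply_of_ne {V : Type*} [Fintype V] [DecidableEq V] (β γ : ℝ)
    (G : SimpleGraph V) [DecidableRel G.Adj] {i j : V} (h : i ≠ j) :
    hMat β γ G i j = if G.Adj i j then C γ else 0 := by
  simp [hMat, degMat, h, SimpleGraph.adjMatrix_apply]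

theorem tree_det_vertex_recursion
    {V : Type*} [Fintype V] [DecidableEq V]
    (T : SimpleGraph V) [DecidableRel T.Adj] (hT : T.IsTree) (β γ : ℝ) (v : V) :
    phi (hMat β γ T) =
      (Polynomial.X - Polynomial.C β * (T.degree v : Polynomial ℝ)) * phi (delSub (hMat β γ T) {v})
        - Polynomial.C (γ ^ 2) * ∑ u ∈ T.neighborFinset v, phi (delSub (hMat β γ T) {u, v}) := by
  set N := (X : ℝ[X]) • (1 : Matrix V V ℝ[X]) - hMat β γ T
  have hN : ∀ i j, i ≠ j → N i j = -hMat β γ T i j := fun i j hij ↦ by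
    simp [N, one_apply_ne hij]
  have hNv : N v v = X - C β * (T.degree v : ℝ[X]) := by simp [N, hMat_apply_self]
  have hNzero : ∀ i j, i ≠ j → ¬ T.Adj i j → N i j = 0 := fun i j hij h ↦ by
    rw [hN _ _ hij, hMat_apply_of_ne _ _ _ hij, if_neg h, neg_zero]
  have hNuv : ∀ u ∈ T.neighborFinset v, N u v * N v u = C (γ ^ 2) := fun u hu ↦ by
    have hadj := (T.mem_neighborFinset v u).mp hu
    rw [hN _ _ hadj.ne', hN _ _ hadj.ne, hMat_apply_of_ne _ _ _ hadj.ne',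
      hMat_apply_of_ne _ _ _ hadj.ne, if_pos hadj, if_pos hadj.symm, C_pow]
    ring
  rw [phi, N.det_eq_sub_sum_of_isAcyclic hT.isAcyclic hNzero v, hNv, phi_delSub, Finset.mul_sum]
  refine congrArg _ (Finset.sum_congr rfl fun u hu ↦ ?_)
  rw [hNuv u hu, phi_delSub]
end
end

section
/- Let T be a tree on a finite vertex type, let β and γ be real numbers, let H(T) = β·D(T) + γ·A(T), and let v be a vertex of T. Then per(x·I − H(T)) = (x − β·d(v))·per(x·I − H_v(T)) + γ²·Σ_{u ∈ N(v)} per(x·I − H_{uv}(T)), where per denotes the matrix permanent. -/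
open Polynomial Matrix

attribute [local instance] Classical.propDecidable

noncomputable section

variable {V : Type*}

variable [Fintype V] [DecidableEq V]

/-!
Only permutations `σ` that send every vertex they move to a neighbour contribute to
`per (x·I - H)`. In a tree every such `σ` is an involution: the `σ`-orbit of `σ v` runs along
edges, so it can only come back to `v` across the bridge `v — σ v`, i.e. by `σ (σ v) = v`.
Hence a contributing `σ` either fixes `v`, giving `(x - β d(v)) per(x·I - H_v)`, or swaps `v`
with a neighbour `u`, giving `(-γ)² per(x·I - H_{uv})`.
-/

namespace SimpleGraph

theorem IsAcyclic.involutive_of_forall_adj {W : Type*} [Finite W] {G : SimpleGraph W}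
    (hG : G.IsAcyclic) (σ : Equiv.Perm W) (hσ : ∀ x, σ x ≠ x → G.Adj x (σ x)) :
    Function.Involutive σ := by
  intro v
  by_contra hv
  have hmove : σ v ≠ v := fun h => hv (by rw [h, h])
  set G' := G.deleteEdges {s(v, σ v)}
  have hbridge : ¬ G'.Reachable v (σ v) :=
    isAcyclic_iff_forall_adj_isBridge.mp hG (hσ v hmove)
  have hstep : ∀ x, G'.Reachable (σ v) x → G'.Reachable (σ v) (σ x) := by
    intro x hx
    by_cases hx' : σ x = x
    · rwa [hx']
    refine hx.trans (deleteEdges_adj.mpr ⟨hσ x hx', ?_⟩).reachable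
    intro h
    rcases Sym2.eq_iff.mp (Set.mem_singleton_iff.mp h) with ⟨rfl, -⟩ | ⟨rfl, h⟩
    · exact hbridge hx.symm
    · exact hv h
  have hpow : ∀ n : ℕ, G'.Reachable (σ v) ((σ ^ n) (σ v)) := by
    intro n
    induction n with
    | zero => rfl
    | succ n ih => rw [pow_succ', Equiv.Perm.mul_apply]; exact hstep _ ih
  have hret : (σ ^ (orderOf σ - 1)) (σ v) = v := by
    rw [← Equiv.Perm.mul_apply, pow_sub_one_mul (orderOf_pos σ).ne', pow_orderOf_eq_one,
      Equiv.Perm.one_apply]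
  exact hbridge (hret ▸ hpow _).symm

end SimpleGraph

theorem delSub_smul_one_sub {W R : Type*} [DecidableEq W] [CommRing R] (c : R)
    (M : Matrix W W R) (S : Set W) :
    delSub (c • (1 : Matrix W W R) - M) S = c • 1 - delSub M S := by
  ext i j
  simp [delSub, Matrix.one_apply, Subtype.ext_iff]

theorem Equiv.Perm.apply_mem_iff_of_support_subset_s15 {S : Set V} {e : Perm V}
    (he : (e.support : Set V) ⊆ S) (x : V) : e x ∈ S ↔ x ∈ S := by
  by_cases hx : e x = x
  · rw [hx]
  · have hx' : x ∈ e.support := Perm.mem_support.mpr hx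
    exact iff_of_true (he (Perm.apply_mem_support.mpr hx')) (he hx')

open Equiv in
theorem prod_ofSubtype_mul_apply {R : Type*} [CommRing R] (M : Matrix V V R) (S : Set V)
    [DecidablePred (· ∈ S)] {e : Perm V} (he : (e.support : Set V) ⊆ S)
    (τ : Perm {w // w ∉ S}) :
    ∏ i, M i ((Perm.ofSubtype τ * e) i)
      = (∏ i ∈ S.toFinset, M i (e i)) * ∏ i, delSub M S i (τ i) := by
  rw [← Finset.prod_mul_prod_compl S.toFinset]
  congr 1
  · refine Finset.prod_congr rfl fun i hi => ?_
    have hei : e i ∈ S := (Perm.apply_mem_iff_of_support_subset_s15 he i).mpr (by simpa using hi)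
    rw [Perm.mul_apply, Perm.ofSubtype_apply_of_not_mem τ (not_not.mpr hei)]
  · rw [Finset.prod_subtype S.toFinsetᶜ (p := (· ∉ S)) (by simp)]
    refine Finset.prod_congr rfl fun i _ => ?_
    rw [Perm.mul_apply, Perm.notMem_support.mp fun h => i.2 (he h), Perm.ofSubtype_apply_coe]
    rfl

open Equiv in
theorem sum_prod_eqOn_eq_mul_per_delSub {R : Type*} [CommRing R] (M : Matrix V V R)
    (S : Set V) [DecidablePred (· ∈ S)] (e : Perm V) (he : (e.support : Set V) ⊆ S) :
    ∑ σ : Perm V with ∀ i ∈ S, σ i = e i, ∏ i, M i (σ i)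
      = (∏ i ∈ S.toFinset, M i (e i)) * (delSub M S).per := by
  -- `σ ↦ σ * e⁻¹` identifies the permutations agreeing with `e` on `S` with those fixing `S`
  have hrestrict (σ : Perm V) (hσ : ∀ i ∈ S, σ i = e i) (a : V) (ha : ¬a ∉ S) :
      (σ * e⁻¹) a = a := by
    have hea : e⁻¹ a ∈ S :=
      (Perm.apply_mem_iff_of_support_subset_s15 (by rwa [Perm.support_inv]) a).mpr (not_not.mp ha)
    rw [Perm.mul_apply, hσ _ hea]
    exact e.apply_symm_apply a
  have hextend (σ : Perm V) (hσ : ∀ i ∈ S, σ i = e i) :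
      Perm.ofSubtype ((Perm.subtypeEquivSubtypePerm _).symm ⟨σ * e⁻¹, hrestrict σ hσ⟩) * e
        = σ := by
    rw [← Perm.subtypeEquivSubtypePerm_apply_coe, Equiv.apply_symm_apply, inv_mul_cancel_right]
  have hagree (τ : Perm {w // w ∉ S}) (i : V) (hi : i ∈ S) : (Perm.ofSubtype τ * e) i = e i :=
    Perm.ofSubtype_apply_of_not_mem τ
      (not_not.mpr ((Perm.apply_mem_iff_of_support_subset_s15 he i).mpr hi))
  rw [Matrix.per, Finset.mul_sum]
  simp_rw [← prod_ofSubtype_mul_apply M S he]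
  refine Finset.sum_bij'
    (fun σ hσ =>
      (Perm.subtypeEquivSubtypePerm _).symm ⟨σ * e⁻¹, hrestrict σ (by simpa using hσ)⟩)
    (fun τ _ => Perm.ofSubtype τ * e) (by simp) (fun τ _ => by simpa using hagree τ)
    (fun σ hσ => hextend σ (by simpa using hσ)) (fun τ _ => ?_)
    (fun σ hσ => by rw [hextend σ (by simpa using hσ)])
  rw [Equiv.symm_apply_eq]
  ext
  simp

open Equiv in
theorem per_expansion_of_isAcyclic {R : Type*} [CommRing R] {G : SimpleGraph V}
    [DecidableRel G.Adj] (hG : G.IsAcyclic) (M : Matrix V V R)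
    (hM : ∀ i j, i ≠ j → ¬G.Adj i j → M i j = 0) (v : V) :
    M.per = M v v * (delSub M {v}).per
      + ∑ u ∈ G.neighborFinset v, M v u * M u v * (delSub M {u, v}).per := by
  have hadj (σ : Perm V) (hσ : ∏ i, M i (σ i) ≠ 0) (i : V) (hi : σ i ≠ i) :
      G.Adj i (σ i) := by
    by_contra h
    exact hσ (Finset.prod_eq_zero (Finset.mem_univ i) (hM _ _ (Ne.symm hi) h))
  rw [Matrix.per, ← Finset.sum_filter_add_sum_filter_not _ (fun σ : Perm V => σ v = v)]
  congr 1
  · simpa using sum_prod_eqOn_eq_mul_per_delSub M {v} 1 (by simp)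
  -- only transpositions of `v` with a neighbour contribute
  rw [← Finset.sum_subset (s₁ := {σ | G.Adj v (σ v) ∧ σ (σ v) = v}) ?_ ?_,
    ← Finset.sum_fiberwise_of_maps_to (g := fun σ => σ v) (t := G.neighborFinset v) ?_]
  · refine Finset.sum_congr rfl fun u hu => ?_
    rw [SimpleGraph.mem_neighborFinset] at hu
    have := sum_prod_eqOn_eq_mul_per_delSub M {u, v} (swap u v) (by simp [Perm.support_swap hu.ne'])
    simp only [Set.toFinset_insert, Set.toFinset_singleton, Finset.prod_pair hu.ne',
      swap_apply_left, swap_apply_right, mul_comm (M u v)] at this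
    rw [← this, Finset.filter_filter]
    refine Finset.sum_congr (Finset.filter_congr fun σ _ => ?_) fun _ _ => rfl
    simp only [Set.mem_insert_iff, Set.mem_singleton_iff, forall_eq_or_imp, forall_eq,
      swap_apply_left, swap_apply_right]
    constructor
    · rintro ⟨⟨-, h⟩, rfl⟩
      exact ⟨h, rfl⟩
    · rintro ⟨h, rfl⟩
      exact ⟨⟨hu, h⟩, rfl⟩
  · intro σ hσ
    simp only [Finset.mem_filter, Finset.mem_univ, true_and] at hσ
    exact (G.mem_neighborFinset _ _).mpr hσ.1
  · intro σ hσ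
    simp only [Finset.mem_filter, Finset.mem_univ, true_and] at hσ ⊢
    exact hσ.1.ne'
  · intro σ hσ hgood
    simp only [Finset.mem_filter, Finset.mem_univ, true_and] at hσ hgood
    by_contra h
    exact hgood ⟨hadj σ h v hσ, hG.involutive_of_forall_adj σ (hadj σ h) v⟩

theorem tree_per_vertex_recursion
    {V : Type*} [Fintype V] [DecidableEq V]
    (T : SimpleGraph V) [DecidableRel T.Adj] (hT : T.IsTree) (β γ : ℝ) (v : V) :
    psi (hMat β γ T) =
      (Polynomial.X - Polynomial.C β * (T.degree v : Polynomial ℝ)) * psi (delSub (hMat β γ T) {v})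
        + Polynomial.C (γ ^ 2) * ∑ u ∈ T.neighborFinset v, psi (delSub (hMat β γ T) {u, v}) := by
  set N := (X : ℝ[X]) • (1 : Matrix V V ℝ[X]) - hMat β γ T
  have hdiag : N v v = X - C β * (T.degree v : ℝ[X]) := by
    simp [N, hMat, degMat]
  have hadj {i j : V} (h : T.Adj i j) : N i j = -C γ := by
    simp [N, hMat, degMat, h, h.ne]
  have hzero (i j : V) (hij : i ≠ j) (h : ¬T.Adj i j) : N i j = 0 := by
    simp [N, hMat, degMat, h, hij]
  rw [psi, per_expansion_of_isAcyclic hT.isAcyclic N hzero v, hdiag, Finset.mul_sum]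
  simp only [psi, ← delSub_smul_one_sub]
  refine congrArg _ (Finset.sum_congr rfl fun u hu => ?_)
  rw [SimpleGraph.mem_neighborFinset] at hu
  rw [hadj hu, hadj hu.symm, neg_mul_neg, C_pow, sq]
end
end

section
/- Let T be a tree on a finite vertex type, let β and γ be real numbers, let H(T) = β·D(T) + γ·A(T), and let e = uv be an edge of T. Then per(x·I − H(T)) = per(x·I − H(T − e)) − β·per(x·I − H_v(T − e)) − β·per(x·I − H_u(T − e)) + (β² + γ²)·per(x·I − H_{uv}(T)), where per denotes the matrix permanent and H(T − e) = β·D(T − e) + γ·A(T − e). -/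
open Polynomial Matrix

attribute [local instance] Classical.propDecidable

noncomputable section

variable {V : Type*}

variable [Fintype V] [DecidableEq V]

/-!
Let `M = xI - H(T)` and `N = xI - H(T - e)`. Deleting `e` lowers the degrees of `u` and `v` by
one and removes the entries `A_uv = A_vu = 1`, so `M` is `N` with `β e_u + γ e_v` subtracted from
row `u` and `β e_v + γ e_u` subtracted from row `v`. Expanding `per M` by multilinearity in these
two rows gives four terms. Replacing row `u` by `e_u` leaves the principal minor at `u`, while
replacing it by `e_v` gives `0`: as `e` is a bridge, the rows indexed by `u` and by the vertices `C`
unreachable from `u` in `T - e` are all supported on the columns `C`, too few for a permutation.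
Replacing both rows leaves `(β² + γ²) per N_uv`, and `N_uv = M_uv`.
-/

lemma delSub_updateRow_of_mem {n R : Type*} [DecidableEq n] (M : Matrix n n R) {S : Set n} {i : n}
    (hi : i ∈ S) (r : n → R) : delSub (M.updateRow i r) S = delSub M S := by
  ext w z
  have hw : (w : n) ≠ i := fun h => w.2 (h ▸ hi)
  simp [delSub, updateRow_ne hw]

lemma delSub_congr_rows {n R : Type*} {M N : Matrix n n R} {S : Set n} (h : ∀ w ∉ S, M w = N w) :
    delSub M S = delSub N S := by
  ext w z
  simp [delSub, h w w.2]

namespace Matrix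

variable {n R : Type*} [Fintype n] [DecidableEq n] [CommRing R]

lemma per_submatrix_id_perm (σ : Equiv.Perm n) (M : Matrix n n R) :
    (M.submatrix id σ).per = M.per :=
  Fintype.sum_equiv (Equiv.mulLeft σ) _ _ fun τ => by simp [Equiv.Perm.mul_apply]

lemma per_updateRow_eq_sum (M : Matrix n n R) (i : n) (r : n → R) :
    (M.updateRow i r).per = ∑ σ : Equiv.Perm n, r (σ i) * ∏ k ∈ Finset.univ.erase i, M k (σ k) := by
  refine Finset.sum_congr rfl fun σ _ => ?_
  rw [← Finset.mul_prod_erase _ _ (Finset.mem_univ i), updateRow_self]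
  congr 1
  exact Finset.prod_congr rfl fun k hk => by rw [updateRow_ne (Finset.ne_of_mem_erase hk)]

lemma per_updateRow_add (M : Matrix n n R) (i : n) (r s : n → R) :
    (M.updateRow i (r + s)).per = (M.updateRow i r).per + (M.updateRow i s).per := by
  simp only [per_updateRow_eq_sum, Pi.add_apply, add_mul, Finset.sum_add_distrib]

lemma per_updateRow_sub (M : Matrix n n R) (i : n) (r s : n → R) :
    (M.updateRow i (r - s)).per = (M.updateRow i r).per - (M.updateRow i s).per := by
  simp only [per_updateRow_eq_sum, Pi.sub_apply, sub_mul, Finset.sum_sub_distrib]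

lemma per_updateRow_sub_updateRow_sub (M : Matrix n n R) {i j : n} (hij : i ≠ j)
    (r s : n → R) :
    ((M.updateRow i (M i - r)).updateRow j (M j - s)).per =
      M.per - (M.updateRow i r).per - (M.updateRow j s).per
        + ((M.updateRow i r).updateRow j s).per := by
  have hj : (M.updateRow i r).updateRow j (M j) = M.updateRow i r := by
    rw [← updateRow_ne (M := M) (b := r) hij.symm, updateRow_eq_self]
  rw [updateRow_comm _ hij, per_updateRow_sub]
  simp only [updateRow_comm M hij.symm]
  rw [per_updateRow_sub, per_updateRow_sub, updateRow_eq_self, updateRow_eq_self, hj]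
  ring

lemma per_eq_of_rows_eq_sub (M N : Matrix n n R) {i j : n} (hij : i ≠ j) {r s : n → R}
    (hi : M i = N i - r) (hj : M j = N j - s) (hk : ∀ k, k ≠ i → k ≠ j → M k = N k) :
    M.per = N.per - (N.updateRow i r).per - (N.updateRow j s).per
      + ((N.updateRow i r).updateRow j s).per := by
  have hM : M = (N.updateRow i (N i - r)).updateRow j (N j - s) := by
    funext k
    rcases eq_or_ne k j with rfl | hkj
    · rw [updateRow_self, hj]
    rcases eq_or_ne k i with rfl | hki
    · rw [updateRow_ne hij, updateRow_self, hi]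
    · rw [updateRow_ne hkj, updateRow_ne hki, hk k hki hkj]
  rw [hM, per_updateRow_sub_updateRow_sub _ hij]

lemma per_eq_zero_of_card_lt (M : Matrix n n R) (rows cols : Finset n)
    (hcard : cols.card < rows.card) (hM : ∀ i ∈ rows, ∀ j ∉ cols, M i j = 0) : M.per = 0 := by
  refine Finset.sum_eq_zero fun σ _ => ?_
  obtain ⟨i, hi, hσi⟩ : ∃ i ∈ rows, σ i ∉ cols := by
    by_contra! h
    exact hcard.not_ge (Finset.card_le_card_of_injOn σ h σ.injective.injOn)
  exact Finset.prod_eq_zero (Finset.mem_univ i) (hM i hi _ hσi)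

/-- `s` and `S` are the same set; `S` carries its own decidability instance so that the lemma
matches minors such as `delSub M {i, j}` as they are elaborated. -/
lemma per_eq_prod_diag_mul_per_delSub (M : Matrix n n R) (s : Finset n) (S : Set n)
    [DecidablePred (· ∈ S)] (hsS : (s : Set n) = S) (hM : ∀ i ∈ s, ∀ j, j ≠ i → M i j = 0) :
    M.per = (∏ i ∈ s, M i i) * (delSub M S).per := by
  subst hsS
  let fixesS : Equiv.Perm n → Prop := fun σ => ∀ i, ¬i ∉ (s : Set n) → σ i = i
  have hsupp : ∀ σ : Equiv.Perm n, ∏ k, M k (σ k) ≠ 0 → fixesS σ := by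
    intro σ hσ i hi
    by_contra hne
    exact hσ (Finset.prod_eq_zero (Finset.mem_univ i) (hM i (by simpa using hi) _ hne))
  have hsplit : ∀ σ, fixesS σ →
      ∏ k, M k (σ k) = (∏ i ∈ s, M i i) * ∏ k : {w // w ∉ (s : Set n)}, M k (σ k) := by
    intro σ hσ
    rw [← Finset.prod_mul_prod_compl s, Finset.prod_subtype (p := (· ∉ (s : Set n))) sᶜ
      (fun _ => by simp)]
    congr 1
    exact Finset.prod_congr rfl fun i hi => by rw [hσ i (by simpa using hi)]
  unfold Matrix.per delSub
  rw [← Finset.sum_filter_of_ne fun σ _ => hsupp σ, Finset.sum_congr rfl fun σ hσ =>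
    hsplit σ (Finset.mem_filter.mp hσ).2, ← Finset.mul_sum,
    Finset.sum_subtype (p := fixesS) _ (fun σ => by simp [fixesS])]
  congr 1
  refine Fintype.sum_equiv (Equiv.Perm.subtypeEquivSubtypePerm _).symm _ _ fun σ => ?_
  refine Finset.prod_congr rfl fun k _ => ?_
  simp [Equiv.Perm.subtypeEquivSubtypePerm, Equiv.Perm.subtypePerm_apply]

lemma per_updateRow_single_self (M : Matrix n n R) (i : n) (c : R) :
    (M.updateRow i (Pi.single i c)).per = c * (delSub M {i}).per := by
  rw [per_eq_prod_diag_mul_per_delSub _ {i} {i} (Finset.coe_singleton i) fun k hk j hj => ?_,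
    delSub_updateRow_of_mem _ (Set.mem_singleton i), Finset.prod_singleton, updateRow_self,
    Pi.single_eq_same]
  obtain rfl := Finset.mem_singleton.mp hk
  rw [updateRow_self, Pi.single_eq_of_ne hj]

lemma per_updateRow_single_self_updateRow_single_self (M : Matrix n n R) {i j : n} (hij : i ≠ j)
    (a b : R) :
    ((M.updateRow j (Pi.single j b)).updateRow i (Pi.single i a)).per =
      a * b * (delSub M {i, j}).per := by
  have hrow : ∀ k ∈ ({i, j} : Finset n), ∀ l, l ≠ k →
      ((M.updateRow j (Pi.single j b)).updateRow i (Pi.single i a)) k l = 0 := by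
    intro k hk l hl
    rcases Finset.mem_insert.mp hk with rfl | hk
    · rw [updateRow_self, Pi.single_eq_of_ne hl]
    · obtain rfl := Finset.mem_singleton.mp hk
      rw [updateRow_ne hij.symm, updateRow_self, Pi.single_eq_of_ne hl]
  rw [per_eq_prod_diag_mul_per_delSub _ _ _ Finset.coe_pair hrow, Finset.prod_pair hij,
    delSub_updateRow_of_mem _ (by simp : i ∈ ({i, j} : Set n)),
    delSub_updateRow_of_mem _ (by simp : j ∈ ({i, j} : Set n)), updateRow_self,
    updateRow_ne hij.symm, updateRow_self, Pi.single_eq_same, Pi.single_eq_same]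

lemma per_updateRow_single_updateRow_single_swap (M : Matrix n n R) {i j : n} (hij : i ≠ j)
    (a b : R) :
    ((M.updateRow j (Pi.single i b)).updateRow i (Pi.single j a)).per =
      a * b * (delSub M {i, j}).per := by
  have hswap : ((M.updateRow j (Pi.single i b)).updateRow i (Pi.single j a)).submatrix id
      (Equiv.swap i j) = (((M.submatrix id (Equiv.swap i j)).updateRow j (Pi.single j b)).updateRow
        i (Pi.single i a)) := by
    ext w z
    simp only [updateRow_apply, submatrix_apply, id, Pi.single_apply, Equiv.swap_apply_def]
    split_ifs <;> simp_all
  have hdel : delSub (M.submatrix id (Equiv.swap i j)) {i, j} = delSub M {i, j} := by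
    ext w z
    have hz : (z : n) ≠ i ∧ (z : n) ≠ j := by simpa [not_or] using z.2
    simp [delSub, Equiv.swap_apply_of_ne_of_ne hz.1 hz.2]
  rw [← per_submatrix_id_perm (Equiv.swap i j), hswap,
    per_updateRow_single_self_updateRow_single_self _ hij, hdel]

lemma per_updateRow_single_updateRow_single_same (M : Matrix n n R) {i j : n} (hij : i ≠ j)
    (k : n) (a b : R) :
    ((M.updateRow j (Pi.single k b)).updateRow i (Pi.single k a)).per = 0 := by
  refine per_eq_zero_of_card_lt _ {i, j} {k} (by simp [Finset.card_pair hij]) fun r hr l hl => ?_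
  rw [Finset.mem_singleton] at hl
  rcases Finset.mem_insert.mp hr with rfl | hr
  · rw [updateRow_self, Pi.single_eq_of_ne hl]
  · obtain rfl := Finset.mem_singleton.mp hr
    rw [updateRow_ne hij.symm, updateRow_self, Pi.single_eq_of_ne hl]

lemma per_updateRow_updateRow_of_pair (M : Matrix n n R) {i j : n} (hij : i ≠ j)
    (a b c d : R) :
    ((M.updateRow i (Pi.single i a + Pi.single j b)).updateRow j
        (Pi.single j d + Pi.single i c)).per = (a * d + b * c) * (delSub M {i, j}).per := by
  rw [per_updateRow_add]
  simp only [updateRow_comm M hij, per_updateRow_add]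
  rw [per_updateRow_single_self_updateRow_single_self _ hij,
    per_updateRow_single_updateRow_single_swap _ hij,
    per_updateRow_single_updateRow_single_same _ hij,
    per_updateRow_single_updateRow_single_same _ hij]
  ring

lemma per_updateRow_single_eq_zero_of_not_reachable (G : SimpleGraph n) (N : Matrix n n R)
    (hN : ∀ w z, w ≠ z → ¬G.Adj w z → N w z = 0) {u v : n} (huv : ¬G.Reachable u v) (c : R) :
    (N.updateRow u (Pi.single v c)).per = 0 := by
  let C : Finset n := {w | ¬G.Reachable u w}
  have hu : u ∉ C := by simp [C]
  have hv : v ∈ C := by simpa [C] using huv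
  -- The rows `insert u C` are all supported on the columns `C`.
  refine per_eq_zero_of_card_lt _ (insert u C) C (by simp [hu]) fun w hw z hz => ?_
  rcases Finset.mem_insert.mp hw with rfl | hw
  · rw [updateRow_self, Pi.single_eq_of_ne (fun (h : z = v) => hz (h ▸ hv))]
  · have hwu : w ≠ u := fun h => hu (h ▸ hw)
    simp only [C, Finset.mem_filter, Finset.mem_univ, true_and, not_not] at hw hz
    rw [updateRow_ne hwu]
    exact hN w z (fun h => hw (h ▸ hz)) fun hadj => hw (hz.trans hadj.symm.reachable)

lemma per_updateRow_single_add_single_of_not_reachable (G : SimpleGraph n) (N : Matrix n n R)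
    (hN : ∀ w z, w ≠ z → ¬G.Adj w z → N w z = 0) {u v : n} (huv : ¬G.Reachable u v) (b c : R) :
    (N.updateRow u (Pi.single u b + Pi.single v c)).per = b * (delSub N {u}).per := by
  rw [per_updateRow_add, per_updateRow_single_self,
    per_updateRow_single_eq_zero_of_not_reachable G N hN huv, add_zero]

end Matrix

lemma psi_delSub {n R : Type*} [Fintype n] [DecidableEq n] [CommRing R] (H : Matrix n n R[X])
    (S : Set n) [DecidablePred (· ∈ S)] :
    psi (delSub H S) = (delSub ((X : R[X]) • (1 : Matrix n n R[X]) - H) S).per := by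
  unfold psi
  congr 1
  ext w z
  simp [delSub, one_apply, Subtype.ext_iff]

namespace SimpleGraph

lemma deleteEdges_singleton_adj_of_eq {α : Type*} (H : SimpleGraph α) {e : Sym2 α} {w w' : α}
    (hw : s(w, w') = e) (z : α) :
    (H.deleteEdges {e}).Adj w z ↔ H.Adj w z ∧ z ≠ w' := by
  rw [deleteEdges_adj, Set.mem_singleton_iff, ← hw, Sym2.congr_right]

variable (G : SimpleGraph V) [DecidableRel G.Adj] {e : Sym2 V} {w w' : V}

lemma neighborFinset_deleteEdges_singleton (hw : s(w, w') = e) :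
    (G.deleteEdges {e}).neighborFinset w = (G.neighborFinset w).erase w' := by
  ext z
  rw [mem_neighborFinset, G.deleteEdges_singleton_adj_of_eq hw, Finset.mem_erase,
    mem_neighborFinset, and_comm]

lemma degree_deleteEdges_singleton_add_one (hadj : G.Adj w w') (hw : s(w, w') = e) :
    (G.deleteEdges {e}).degree w + 1 = G.degree w := by
  rw [← card_neighborFinset_eq_degree, ← card_neighborFinset_eq_degree,
    neighborFinset_deleteEdges_singleton G hw, Finset.card_erase_add_one (by simpa using hadj)]

lemma degree_deleteEdges_singleton_of_notMem (hw : w ∉ e) :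
    (G.deleteEdges {e}).degree w = G.degree w := by
  rw [← card_neighborFinset_eq_degree, ← card_neighborFinset_eq_degree]
  congr 1
  ext z
  simp only [mem_neighborFinset, deleteEdges_adj, Set.mem_singleton_iff, and_iff_left_iff_imp]
  exact fun _ h => hw (h ▸ Sym2.mem_mk_left w z)

end SimpleGraph

section hMat

variable (β γ : ℝ) (G : SimpleGraph V) [DecidableRel G.Adj] {e : Sym2 V} {w w' : V}

lemma hMat_apply (w z : V) :
    hMat β γ G w z = (if w = z then C β * (G.degree w : ℝ[X]) else 0)
      + (if G.Adj w z then C γ else 0) := by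
  simp [hMat, degMat, diagonal_apply, SimpleGraph.adjMatrix_apply, mul_ite]

lemma charMat_hMat_apply_of_ne_of_not_adj {z : V} (hwz : w ≠ z) (hadj : ¬G.Adj w z) :
    ((X : ℝ[X]) • (1 : Matrix V V ℝ[X]) - hMat β γ G) w z = 0 := by
  simp [hMat_apply, hwz, hadj]

lemma hMat_deleteEdges_row_of_notMem (hw : w ∉ e) :
    hMat β γ (G.deleteEdges {e}) w = hMat β γ G w := by
  funext z
  have hadj : (G.deleteEdges {e}).Adj w z ↔ G.Adj w z := by
    simpa using fun _ (h : s(w, z) = e) => hw (h ▸ Sym2.mem_mk_left w z)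
  simp only [hMat_apply, G.degree_deleteEdges_singleton_of_notMem hw, hadj]

lemma hMat_row_eq_deleteEdges_row_add (hadj : G.Adj w w') (hw : s(w, w') = e) :
    hMat β γ G w = hMat β γ (G.deleteEdges {e}) w + (Pi.single w (C β) + Pi.single w' (C γ)) := by
  funext z
  rw [Pi.add_apply, hMat_apply, hMat_apply, ← G.degree_deleteEdges_singleton_add_one hadj hw]
  simp only [G.deleteEdges_singleton_adj_of_eq hw]
  rcases eq_or_ne z w with rfl | hzw
  · simp [hadj.ne.symm, mul_add]
  rcases eq_or_ne z w' with rfl | hzw'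
  · simp [hzw.symm, hadj]
  · simp [hzw.symm, hzw, hzw']

lemma charMat_hMat_deleteEdges_row_of_notMem (hw : w ∉ e) :
    ((X : ℝ[X]) • (1 : Matrix V V ℝ[X]) - hMat β γ (G.deleteEdges {e})) w =
      ((X : ℝ[X]) • (1 : Matrix V V ℝ[X]) - hMat β γ G) w :=
  congrArg (((X : ℝ[X]) • (1 : Matrix V V ℝ[X])) w - ·) (hMat_deleteEdges_row_of_notMem β γ G hw)

lemma charMat_hMat_row_eq_deleteEdges_row_sub (hadj : G.Adj w w') (hw : s(w, w') = e) :
    ((X : ℝ[X]) • (1 : Matrix V V ℝ[X]) - hMat β γ G) w =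
      ((X : ℝ[X]) • (1 : Matrix V V ℝ[X]) - hMat β γ (G.deleteEdges {e})) w
        - (Pi.single w (C β) + Pi.single w' (C γ)) := by
  change _ - hMat β γ G w = _ - hMat β γ (G.deleteEdges {e}) w - _
  rw [hMat_row_eq_deleteEdges_row_add β γ G hadj hw, sub_add_eq_sub_sub]

end hMat

theorem tree_per_edge_recursion
    {V : Type*} [Fintype V] [DecidableEq V]
    (T : SimpleGraph V) [DecidableRel T.Adj] (hT : T.IsTree) (β γ : ℝ)
    (u v : V) (he : T.Adj u v) :
    psi (hMat β γ T) =
      psi (hMat β γ (T.deleteEdges {s(u, v)}))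
        - Polynomial.C β * psi (delSub (hMat β γ (T.deleteEdges {s(u, v)})) {v})
        - Polynomial.C β * psi (delSub (hMat β γ (T.deleteEdges {s(u, v)})) {u})
        + Polynomial.C (β ^ 2 + γ ^ 2) * psi (delSub (hMat β γ T) {u, v}) := by
  set T' := T.deleteEdges {s(u, v)}
  set N := (X : ℝ[X]) • (1 : Matrix V V ℝ[X]) - hMat β γ T'
  have hrows (w : V) (hwu : w ≠ u) (hwv : w ≠ v) :
      N w = ((X : ℝ[X]) • (1 : Matrix V V ℝ[X]) - hMat β γ T) w :=
    charMat_hMat_deleteEdges_row_of_notMem β γ T (by simp [hwu, hwv])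
  have hbridge : ¬T'.Reachable u v :=
    SimpleGraph.isBridge_iff.mp (SimpleGraph.isAcyclic_iff_forall_adj_isBridge.mp hT.isAcyclic he)
  have hN (w z : V) : w ≠ z → ¬T'.Adj w z → N w z = 0 := charMat_hMat_apply_of_ne_of_not_adj β γ T'
  rw [psi_delSub, psi_delSub, psi_delSub, delSub_congr_rows (S := {u, v}) (N := N) fun w hw => by
    simp only [Set.mem_insert_iff, Set.mem_singleton_iff, not_or] at hw
    exact (hrows w hw.1 hw.2).symm]
  unfold psi
  rw [per_eq_of_rows_eq_sub _ N he.ne (charMat_hMat_row_eq_deleteEdges_row_sub β γ T he rfl)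
      (charMat_hMat_row_eq_deleteEdges_row_sub β γ T he.symm Sym2.eq_swap)
      fun w hwu hwv => (hrows w hwu hwv).symm,
    per_updateRow_single_add_single_of_not_reachable T' N hN hbridge,
    per_updateRow_single_add_single_of_not_reachable T' N hN (fun h => hbridge h.symm),
    per_updateRow_updateRow_of_pair _ he.ne]
  simp only [map_add, map_pow]
  ring
end
end
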